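/- arXiv:1112.6275 — 6 statements merged into one kernel-verified Lean document; each statement's English description precedes it below -/
import Mathlib

section
/- (Adjoint dependence maps) Let V be a finite set partitioned into existential E and universal U with a linear order, and Dep(y) ⊆ U for y ∈ E the preceding universal variables. Let D, T be sets, and let θ : (U → (T → D)) → (V → (T → D)) admit an adjoint θ̂ : T → ((U → D) → (V → D)). Then θ is a dependence map over (T → D) (i.e., θ(g)|_U = g and θ(g)(y) depends only on g|_{Dep(y)}) if and only if for every t ∈ T, θ̂(t) is a dependence map over D. -/
def IsDepMap {V D : Type*} [LinearOrder V] (Uv : V → Prop)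
    (θ : ({u : V // Uv u} → D) → (V → D)) : Prop :=
  (∀ (v : {u : V // Uv u} → D) (u : {u : V // Uv u}), θ v u.val = v u) ∧
  (∀ (v₁ v₂ : {u : V // Uv u} → D) (y : V), ¬ Uv y →
    (∀ u : {u : V // Uv u}, u.val < y → v₁ u = v₂ u) → θ v₁ y = θ v₂ y)

theorem adjoint_depMap_iff {V D T : Type*} [Fintype V] [LinearOrder V] (E : V → Prop)
    (θ : ({u : V // ¬ E u} → (T → D)) → (V → (T → D)))
    (θhat : T → (({u : V // ¬ E u} → D) → (V → D)))
    (hadj : ∀ (g : {u : V // ¬ E u} → (T → D)) (x : V) (t : T),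
      θhat t (fun u => g u t) x = θ g x t) :
    IsDepMap (fun x => ¬ E x) θ ↔ ∀ t : T, IsDepMap (fun x => ¬ E x) (θhat t) := by
  constructor
  · rintro ⟨h1, h2⟩ t
    constructor
    · intro v u
      have := hadj (fun u' _ => v u') u.val t
      simpa [h1 (fun u' _ => v u') u] using this
    · intro v₁ v₂ y hy hlt
      have e1 := hadj (fun u' _ => v₁ u') y t
      have e2 := hadj (fun u' _ => v₂ u') y t
      have := h2 (fun u' _ => v₁ u') (fun u' _ => v₂ u') y hy
        (fun u hu => funext fun _ => hlt u hu)
      calc θhat t v₁ y = θ (fun u' _ => v₁ u') y t := e1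
        _ = θ (fun u' _ => v₂ u') y t := by rw [this]
        _ = θhat t v₂ y := e2.symm
  · intro h
    constructor
    · intro v u
      funext t
      rw [← hadj v u.val t, (h t).1 (fun u' => v u' t) u]
    · intro v₁ v₂ y hy hlt
      funext t
      rw [← hadj v₁ y t, ← hadj v₂ y t]
      exact (h t).2 _ _ y hy (fun u hu => by rw [hlt u hu])
end

section
/- (Excess of dependence maps over adjoint functions) Let D, T be finite sets with |D| > 1 and |T| > 1, and suppose the prefix data (V, E, U, Dep) has some y ∈ E with Dep(y) ≠ ∅. Then the number of dependence maps over the function set (T → D) is strictly greater than the number of functions from T to dependence maps over D; explicitly, ∏_{y∈E} |D|^(|T|·|D|^(|T|·|Dep(y)|)) > ∏_{y∈E} |D|^(|T|·|D|^|Dep(y)|). In particular, not every dependence map over T → D is elementary. -/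
theorem depMap_count_gt {V D T : Type*} [Fintype V] [LinearOrder V]
    [Fintype D] [Fintype T] (E : V → Prop) [DecidablePred E]
    (hD : 1 < Fintype.card D) (hT : 1 < Fintype.card T)
    (hy : ∃ y : V, E y ∧ 0 < Nat.card {u : V // ¬ E u ∧ u < y}) :
    (∏ y ∈ Finset.univ.filter E,
      (Fintype.card D) ^ (Fintype.card T *
        (Fintype.card D) ^ (Fintype.card T * Nat.card {u : V // ¬ E u ∧ u < y}))) >
    (∏ y ∈ Finset.univ.filter E,
      (Fintype.card D) ^ (Fintype.card T *
        (Fintype.card D) ^ (Nat.card {u : V // ¬ E u ∧ u < y}))) ∧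
    ∃ θ : ({u : V // ¬ E u} → (T → D)) → (V → (T → D)),
      IsDepMap (fun x => ¬ E x) θ ∧
      ¬ ∃ θhat : T → (({u : V // ¬ E u} → D) → (V → D)),
        ∀ (g : {u : V // ¬ E u} → (T → D)) (x : V) (t : T),
          θhat t (fun u => g u t) x = θ g x t := by
  classical
  obtain ⟨y₀, hEy₀, hcard⟩ := hy
  have hD0 : 0 < Fintype.card D := lt_trans Nat.zero_lt_one hD
  have hT0 : 0 < Fintype.card T := lt_trans Nat.zero_lt_one hT
  constructor
  · apply Finset.prod_lt_prod
    · intro i _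
      exact pow_pos hD0 _
    · intro i _
      apply Nat.pow_le_pow_right hD0
      apply Nat.mul_le_mul_left
      apply Nat.pow_le_pow_right hD0
      exact Nat.le_mul_of_pos_left _ hT0
    · refine ⟨y₀, Finset.mem_filter.2 ⟨Finset.mem_univ _, hEy₀⟩, ?_⟩
      apply Nat.pow_lt_pow_right hD
      apply Nat.mul_lt_mul_of_pos_left _ hT0
      apply Nat.pow_lt_pow_right hD
      exact (Nat.lt_mul_iff_one_lt_left hcard).mpr hT
  · -- construct the counterexample dependence map
    have hne : Nonempty {u : V // ¬ E u ∧ u < y₀} := (Nat.card_pos_iff.mp hcard).1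
    obtain ⟨u₀⟩ := hne
    obtain ⟨t₀, t₁, ht⟩ := Fintype.exists_pair_of_one_lt_card hT
    obtain ⟨d₀, d₁, hd⟩ := Fintype.exists_pair_of_one_lt_card hD
    set u₀' : {u : V // ¬ E u} := ⟨u₀.1, u₀.2.1⟩ with hu₀'
    refine ⟨fun g x => if hx : E x then (if x = y₀ then fun _ => g u₀' t₁ else fun _ => d₀)
      else g ⟨x, hx⟩, ⟨?_, ?_⟩, ?_⟩
    · intro v u
      simp only [u.2, dif_neg, not_false_iff]
    · intro v₁ v₂ y hy h
      have hEy : E y := not_not.mp hy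
      simp only [dif_pos hEy]
      by_cases hyy : y = y₀
      · simp only [if_pos hyy]
        have := h u₀' (by simpa [hu₀', hyy] using u₀.2.2)
        rw [this]
      · simp [if_neg hyy]
    · rintro ⟨θhat, hθ⟩
      set g : {u : V // ¬ E u} → (T → D) := fun _ _ => d₀ with hg
      set g' : {u : V // ¬ E u} → (T → D) :=
        fun u t => if u = u₀' ∧ t = t₁ then d₁ else d₀ with hg'
      have hsame : (fun u => g u t₀) = (fun u => g' u t₀) := by
        funext u
        simp [hg, hg', ht]
      have h1 := hθ g y₀ t₀
      have h2 := hθ g' y₀ t₀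
      rw [hsame] at h1
      rw [h1] at h2
      simp only [dif_pos hEy₀, if_pos rfl, hg, hg'] at h2
      simp at h2
      exact hd h2
end

section
/- (Dependence incidence) Let V be a finite set with a linear order, partitioned into E and U, and let the dual prefix swap the roles of E and U (same order). Let D be a nonempty set, θ a dependence map for the prefix over D, and θ̄ a dependence map for the dual prefix over D. Then there exists a valuation v : V → D such that v = θ(v|_U) = θ̄(v|_E). -/
noncomputable def buildVal {V D : Type*} [Fintype V] [LinearOrder V] [Nonempty D]
    (E : V → Prop)
    (θ : ({u : V // ¬ E u} → D) → (V → D))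
    (θd : ({u : V // E u} → D) → (V → D)) : V → D :=
  (IsWellFounded.wf (r := ((· < ·) : V → V → Prop))).fix fun y rec =>
    letI := Classical.propDecidable
    if E y then
      θ (fun u => if h : u.val < y then rec u.val h else Classical.arbitrary D) y
    else
      θd (fun u => if h : u.val < y then rec u.val h else Classical.arbitrary D) y

theorem buildVal_eq {V D : Type*} [Fintype V] [LinearOrder V] [Nonempty D]
    (E : V → Prop)
    (θ : ({u : V // ¬ E u} → D) → (V → D))
    (θd : ({u : V // E u} → D) → (V → D)) (y : V) :
    buildVal E θ θd y =
      letI := Classical.propDecidable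
      if E y then
        θ (fun u => if u.val < y then buildVal E θ θd u.val else Classical.arbitrary D) y
      else
        θd (fun u => if u.val < y then buildVal E θ θd u.val else Classical.arbitrary D) y := by
  rw [buildVal, WellFounded.fix_eq]
  rfl

theorem dep_incidence {V D : Type*} [Fintype V] [LinearOrder V] [Nonempty D]
    (E : V → Prop)
    (θ : ({u : V // ¬ E u} → D) → (V → D))
    (θd : ({u : V // E u} → D) → (V → D))
    (hθ : IsDepMap (fun x => ¬ E x) θ)
    (hθd : IsDepMap E θd) :
    ∃ v : V → D,
      (∀ x : V, v x = θ (fun u => v u.val) x) ∧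
      (∀ x : V, v x = θd (fun u => v u.val) x) := by
  classical
  set v := buildVal E θ θd with hv
  refine ⟨v, fun x => ?_, fun x => ?_⟩
  · by_cases hx : E x
    · rw [hθ.2 (fun u => v u.val)
        (fun u => if u.val < x then v u.val else Classical.arbitrary D) x (by simpa using hx)
        (fun u hu => by simp [hu])]
      rw [hv, buildVal_eq]
      simp only [hx, if_true, if_false]
      congr!
    · exact (hθ.1 (fun u => v u.val) ⟨x, hx⟩).symm
  · by_cases hx : E x
    · exact (hθd.1 (fun u => v u.val) ⟨x, hx⟩).symm
    · rw [hθd.2 (fun u => v u.val)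
        (fun u => if u.val < x then v u.val else Classical.arbitrary D) x hx
        (fun u hu => by simp [hu])]
      rw [hv, buildVal_eq]
      simp only [hx, if_true, if_false]
      congr!
end

section
/- (Dependence dualization) Let V be a finite set with a linear order, partitioned into E and U, let D be a nonempty set, and let P ⊆ (V → D) be a set of valuations. Suppose that for every dependence map θ for the prefix over D there exists w : U → D such that θ(w) ∈ P. Then there exists a dependence map θ̄ for the dual prefix (with existential set U and universal set E) over D such that θ̄(w̄) ∈ P for all w̄ : E → D. -/
section Aux

universe u v

def extFun {V : Type u} {D : Type v} [DecidableEq V] (v₀ : V) (d : D)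
    (f : {x : V // x ≠ v₀} → D) : V → D :=
  fun x => if h : x = v₀ then d else f ⟨x, h⟩

theorem extFun_pos {V : Type u} {D : Type v} [DecidableEq V] (v₀ : V) (d : D)
    (f : {x : V // x ≠ v₀} → D) : extFun v₀ d f v₀ = d := dif_pos rfl

theorem extFun_neg {V : Type u} {D : Type v} [DecidableEq V] (v₀ : V) (d : D)
    (f : {x : V // x ≠ v₀} → D) {x : V} (hx : x ≠ v₀) :
    extFun v₀ d f x = f ⟨x, hx⟩ := dif_neg hx

theorem dep_aux {D : Type v} [Nonempty D] :
    ∀ (n : ℕ) (V : Type u) [Fintype V] [LinearOrder V]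
      (E : V → Prop) (P : Set (V → D)), Fintype.card V ≤ n →
      (∀ θ : ({u : V // ¬ E u} → D) → (V → D),
        IsDepMap (fun x => ¬ E x) θ → ∃ w, θ w ∈ P) →
      ∃ θd : ({u : V // E u} → D) → (V → D),
        IsDepMap E θd ∧ ∀ w, θd w ∈ P := by
  intro n
  induction n with
  | zero =>
    intro V _ _ E P hcard h
    have hE : IsEmpty V := Fintype.card_eq_zero_iff.mp (Nat.le_zero.mp hcard)
    obtain ⟨w₀, hw₀⟩ := h (fun _ x => isEmptyElim x)
      ⟨fun v u => isEmptyElim u.val, fun v₁ v₂ y _ _ => isEmptyElim y⟩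
    exact ⟨fun _ x => isEmptyElim x,
      ⟨fun v u => isEmptyElim u.val, fun v₁ v₂ y _ _ => isEmptyElim y⟩,
      fun w => hw₀⟩
  | succ n ih =>
    intro V _ _ E P hcard h
    by_cases hn : Fintype.card V ≤ n
    · exact ih V E P hn h
    have hne : Nonempty V := by
      rw [← Fintype.card_pos_iff]; omega
    have huniv : (Finset.univ : Finset V).Nonempty := Finset.univ_nonempty
    set v₀ : V := Finset.univ.min' huniv with hv₀def
    have hmin : ∀ x : V, v₀ ≤ x := fun x => Finset.min'_le _ x (Finset.mem_univ x)
    have hlt : ∀ x : V, x ≠ v₀ → v₀ < x := fun x hx => lt_of_le_of_ne (hmin x) (Ne.symm hx)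
    have hcard' : Fintype.card {x : V // x ≠ v₀} ≤ n := by
      have h1 : Fintype.card {x : V // x ≠ v₀} = Fintype.card V - 1 := by
        simp
      omega
    by_cases hv₀ : E v₀
    · -- v₀ is universal for the dual prefix
      have hd : ∀ d : D, ∃ θd' : ({u : {x : V // x ≠ v₀} // E u.val} → D) → ({x : V // x ≠ v₀} → D),
          IsDepMap (fun x : {x : V // x ≠ v₀} => E x.val) θd' ∧
          ∀ w', extFun v₀ d (θd' w') ∈ P := by
        intro d
        apply ih {x : V // x ≠ v₀} (fun x => E x.val) {f | extFun v₀ d f ∈ P} hcard'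
        intro θ' hθ'
        have hdep : IsDepMap (fun x : V => ¬ E x)
            (fun w => extFun v₀ d (θ' (fun u => w ⟨u.val.val, u.prop⟩))) := by
          constructor
          · intro v u
            have hu : u.val ≠ v₀ := fun hh => u.prop (hh ▸ hv₀)
            beta_reduce; rw [extFun_neg v₀ d _ hu, hθ'.1 _ ⟨⟨u.val, hu⟩, u.prop⟩]
          · intro v₁ v₂ y hy hag
            by_cases hyv : y = v₀
            · subst hyv; beta_reduce; rw [extFun_pos, extFun_pos]
            · beta_reduce; rw [extFun_neg v₀ d _ hyv, extFun_neg v₀ d _ hyv]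
              apply hθ'.2 _ _ ⟨y, hyv⟩ hy
              intro u hu
              exact hag ⟨u.val.val, u.prop⟩ hu
        obtain ⟨w, hw⟩ := h _ hdep
        exact ⟨fun u => w ⟨u.val.val, u.prop⟩, hw⟩
      choose θd' hdep hout using hd
      refine ⟨fun w => extFun v₀ (w ⟨v₀, hv₀⟩)
        (θd' (w ⟨v₀, hv₀⟩) (fun u => w ⟨u.val.val, u.prop⟩)), ⟨?_, ?_⟩, ?_⟩
      · intro v u
        by_cases hu : u.val = v₀
        · have h1 : u = ⟨v₀, hv₀⟩ := Subtype.ext hu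
          subst h1
          exact extFun_pos _ _ _
        · beta_reduce; rw [extFun_neg _ _ _ hu, (hdep _).1 _ ⟨⟨u.val, hu⟩, u.prop⟩]
      · intro v₁ v₂ y hy hag
        have hyv : y ≠ v₀ := fun hh => hy (hh ▸ hv₀)
        have h0 : v₁ ⟨v₀, hv₀⟩ = v₂ ⟨v₀, hv₀⟩ := hag ⟨v₀, hv₀⟩ (hlt y hyv)
        beta_reduce; rw [extFun_neg _ _ _ hyv, extFun_neg _ _ _ hyv, h0]
        apply (hdep _).2 _ _ ⟨y, hyv⟩ hy
        intro u hu
        exact hag ⟨u.val.val, u.prop⟩ hu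
      · intro w
        exact hout (w ⟨v₀, hv₀⟩) (fun u => w ⟨u.val.val, u.prop⟩)
    · -- v₀ is existential for the dual prefix
      have hclaim : ∃ d₀ : D, ∀ θ' : ({u : {x : V // x ≠ v₀} // ¬ E u.val} → D) → ({x : V // x ≠ v₀} → D),
          IsDepMap (fun x : {x : V // x ≠ v₀} => ¬ E x.val) θ' →
          ∃ w', extFun v₀ d₀ (θ' w') ∈ P := by
        by_contra hno
        push_neg at hno
        choose θ' hdep' hbad using hno
        have hdep : IsDepMap (fun x : V => ¬ E x)
            (fun w => extFun v₀ (w ⟨v₀, hv₀⟩)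
              (θ' (w ⟨v₀, hv₀⟩) (fun u => w ⟨u.val.val, u.prop⟩))) := by
          constructor
          · intro v u
            by_cases hu : u.val = v₀
            · have h1 : u = ⟨v₀, hv₀⟩ := Subtype.ext hu
              subst h1
              exact extFun_pos _ _ _
            · beta_reduce; rw [extFun_neg _ _ _ hu, (hdep' _).1 _ ⟨⟨u.val, hu⟩, u.prop⟩]
          · intro v₁ v₂ y hy hag
            have hyv : y ≠ v₀ := fun hh => hy (hh ▸ hv₀)
            have h0 : v₁ ⟨v₀, hv₀⟩ = v₂ ⟨v₀, hv₀⟩ := hag ⟨v₀, hv₀⟩ (hlt y hyv)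
            beta_reduce; rw [extFun_neg _ _ _ hyv, extFun_neg _ _ _ hyv, h0]
            apply (hdep' _).2 _ _ ⟨y, hyv⟩ hy
            intro u hu
            exact hag ⟨u.val.val, u.prop⟩ hu
        obtain ⟨w, hw⟩ := h _ hdep
        exact hbad (w ⟨v₀, hv₀⟩) (fun u => w ⟨u.val.val, u.prop⟩) hw
      obtain ⟨d₀, hd₀⟩ := hclaim
      obtain ⟨θd', hdep, hout⟩ := ih {x : V // x ≠ v₀} (fun x => E x.val)
        {f | extFun v₀ d₀ f ∈ P} hcard' hd₀
      refine ⟨fun w => extFun v₀ d₀ (θd' (fun u => w ⟨u.val.val, u.prop⟩)), ⟨?_, ?_⟩, ?_⟩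
      · intro v u
        have hu : u.val ≠ v₀ := fun hh => hv₀ (hh ▸ u.prop)
        beta_reduce; rw [extFun_neg _ _ _ hu, hdep.1 _ ⟨⟨u.val, hu⟩, u.prop⟩]
      · intro v₁ v₂ y hy hag
        by_cases hyv : y = v₀
        · subst hyv; beta_reduce; rw [extFun_pos, extFun_pos]
        · beta_reduce; rw [extFun_neg _ _ _ hyv, extFun_neg _ _ _ hyv]
          apply hdep.2 _ _ ⟨y, hyv⟩ hy
          intro u hu
          exact hag ⟨u.val.val, u.prop⟩ hu
      · intro w
        exact hout (fun u => w ⟨u.val.val, u.prop⟩)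

end Aux

theorem dep_dualization {V D : Type*} [Fintype V] [LinearOrder V] [Nonempty D]
    (E : V → Prop) (P : Set (V → D))
    (h : ∀ θ : ({u : V // ¬ E u} → D) → (V → D),
      IsDepMap (fun x => ¬ E x) θ → ∃ w, θ w ∈ P) :
    ∃ θd : ({u : V // E u} → D) → (V → D),
      IsDepMap E θd ∧ ∀ w, θd w ∈ P :=
  dep_aux (Fintype.card V) V E P le_rfl h
end

section
/- (Only-elementary prefixes) Let V be a finite set with a linear order partitioned into E and U such that every existential variable precedes every universal variable (an ∃*∀* prefix). Then for all sets T and D with D nonempty, every dependence map θ for this prefix over (T → D) is elementary, i.e., admits an adjoint function θ̂ : T → ((U → D) → (V → D)) with θ̂(t)(λu. g(u)(t))(x) = θ(g)(x)(t) for all g, x, t. -/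
theorem exists_adjoint_of_existsForallPrefix {V D T : Type*} [Fintype V] [LinearOrder V]
    [Nonempty D] (E : V → Prop)
    (hpre : ∀ y x : V, E y → ¬ E x → y < x)
    (θ : ({u : V // ¬ E u} → (T → D)) → (V → (T → D)))
    (hθ : IsDepMap (fun x => ¬ E x) θ) :
    ∃ θhat : T → (({u : V // ¬ E u} → D) → (V → D)),
      ∀ (g : {u : V // ¬ E u} → (T → D)) (x : V) (t : T),
        θhat t (fun u => g u t) x = θ g x t := by
  classical
  obtain ⟨d⟩ := ‹Nonempty D›
  set g₀ : {u : V // ¬ E u} → (T → D) := fun _ _ => d with hg₀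
  refine ⟨fun t h x => if hx : E x then θ g₀ x t else h ⟨x, hx⟩, ?_⟩
  intro g x t
  by_cases hx : E x
  · simp only [hx, dif_pos]
    have := hθ.2 g₀ g x (not_not_intro hx)
      (fun u hu => absurd hu (not_lt_of_gt (hpre x u.val hx u.property)))
    rw [this]
  · simp only [hx, dif_neg, not_false_iff]
    exact (congrFun (hθ.1 g ⟨x, hx⟩) t).symm
end

section
/- (Prepend-universal decomposition) Let (V, E, U, order) be prefix data over D, with x ∈ U being the least element of the order. Then dependence maps θ for this prefix are in bijection with families (θ_e)_{e ∈ D} of dependence maps for the prefix on V \ {x} (with universal set U \ {x}), via θ(v) = θ_{v(x)}(v|_{U\{x\}})[x ↦ v(x)] for all v : U → D. -/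
theorem depMap_prepend_universal {V D : Type*} [LinearOrder V] [DecidableEq V]
    (E : V → Prop) (x : V) (hx : ¬ E x) (hleast : ∀ z : V, x ≤ z) :
    ∃ Φ : {F : D → (({u : {z : V // z ≠ x} // ¬ E u.val} → D) → ({z : V // z ≠ x} → D)) //
            ∀ e : D, IsDepMap (fun u : {z : V // z ≠ x} => ¬ E u.val) (F e)} ≃
          {θ : ({u : V // ¬ E u} → D) → (V → D) // IsDepMap (fun z => ¬ E z) θ},
      ∀ (F : {F : D → (({u : {z : V // z ≠ x} // ¬ E u.val} → D) → ({z : V // z ≠ x} → D)) //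
            ∀ e : D, IsDepMap (fun u : {z : V // z ≠ x} => ¬ E u.val) (F e)})
        (v : {u : V // ¬ E u} → D) (z : V),
        (Φ F).val v z =
          if h : z = x then v ⟨x, hx⟩
          else (F.val (v ⟨x, hx⟩) (fun u => v ⟨u.val.val, u.2⟩)) ⟨z, h⟩ := by
  classical
  refine ⟨⟨
    fun F => ⟨fun v z => if h : z = x then v ⟨x, hx⟩
        else (F.val (v ⟨x, hx⟩) (fun u => v ⟨u.val.val, u.2⟩)) ⟨z, h⟩, ?_, ?_⟩,
    fun θ => ⟨fun e w z =>
        θ.val (fun u => if h : u.val = x then e else w ⟨⟨u.val, h⟩, u.2⟩) z.val, ?_⟩,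
    ?_, ?_⟩, fun F v z => rfl⟩
  · -- first dep map property of toFun
    intro v u
    by_cases h : (u : V) = x
    · simp only [h, dif_pos]
      congr 1
      exact Subtype.ext h.symm
    · simp only [dif_neg h]
      exact (F.2 (v ⟨x, hx⟩)).1 _ ⟨⟨u.val, h⟩, u.2⟩
  · -- second dep map property of toFun
    intro v₁ v₂ y hy hlt
    have hyx : y ≠ x := fun h => hy (h ▸ hx)
    have hxy : x < y := lt_of_le_of_ne (hleast y) (Ne.symm hyx)
    have hex : v₁ ⟨x, hx⟩ = v₂ ⟨x, hx⟩ := hlt ⟨x, hx⟩ hxy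
    simp only [dif_neg hyx]
    rw [hex]
    exact (F.2 (v₂ ⟨x, hx⟩)).2 _ _ ⟨y, hyx⟩ hy
      (fun u hu => hlt ⟨u.val.val, u.2⟩ hu)
  · -- invFun produces dep maps
    intro e
    constructor
    · intro w u
      show θ.val (fun u' => if h : u'.val = x then e
          else w ⟨⟨u'.val, h⟩, u'.2⟩) u.val.val = w u
      have h1 := θ.2.1 (fun u' => if h : u'.val = x then e
          else w ⟨⟨u'.val, h⟩, u'.2⟩) ⟨u.val.val, u.2⟩
      rw [h1, dif_neg u.val.2]
    · intro w₁ w₂ y hy hlt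
      refine θ.2.2 _ _ y.val hy ?_
      intro u hu
      by_cases h : u.val = x
      · simp [h]
      · simp only [dif_neg h]
        exact hlt ⟨⟨u.val, h⟩, u.2⟩ hu
  · -- left_inv
    intro F
    apply Subtype.ext
    funext e w z
    simp only [dif_neg z.2, dif_pos rfl]
    have : (fun u : {u : {z : V // z ≠ x} // ¬ E u.val} =>
        if h : (u.val.val : V) = x then e else w ⟨⟨u.val.val, h⟩, u.2⟩) = w := by
      funext u
      simp only [dif_neg u.val.2]
    rw [this]
    simp only [dite_true]
  · -- right_inv
    intro θ
    apply Subtype.ext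
    funext v z
    by_cases h : z = x
    · subst h
      simp only [dif_pos rfl]
      exact (θ.2.1 v ⟨z, hx⟩).symm
    · simp only [dif_neg h]
      have : (fun u : {u : V // ¬ E u} => if h : (u : V) = x then v ⟨x, hx⟩
          else v ⟨u.val, u.2⟩) = v := by
        funext u
        by_cases hu : (u : V) = x
        · simp only [dif_pos hu]
          congr 1
          exact Subtype.ext hu.symm
        · simp only [dif_neg hu]
      rw [this]
end
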